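/- If a ∈ L¹(Δ,μ_Δ) ∩ S₀(Δ) and ξ ∈ S₀(G), then the Bochner integral π_Δ(a)ξ := ∫_Δ a(z)·(π(z)ξ) dμ_Δ(z) (an element of L²(G)) belongs to S₀(G). -/

import Mathlib

/- Time-frequency analysis on a locally compact abelian (multiplicatively written) group `H`.
`PontryaginDual H` is the dual group (continuous characters into the circle group) with the
compact-open topology.  `L²(H)` is `MeasureTheory.Lp ℂ 2 μ` for a Haar measure `μ` on `H`. -/

open MeasureTheory ComplexConjugate

noncomputable section

namespace Gabor

variable {H : Type*} [CommGroup H] [TopologicalSpace H] [IsTopologicalGroup H]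
  [MeasurableSpace H] [BorelSpace H]

/-- The function defining the time-frequency shift `π(x,ω)ξ : t ↦ ω(t)·ξ(t·x⁻¹)`
(the group is written multiplicatively, so `t·x⁻¹` is "`t - x`") lies in `L²`. -/
theorem tf_memℒp (μ : Measure H) [μ.IsMulRightInvariant]
    (z : H × PontryaginDual H) (ξ : Lp ℂ 2 μ) :
    MemLp (fun t => (z.2 t : ℂ) * ξ (t * z.1⁻¹)) 2 μ := by
  have hmp : MeasurePreserving (fun t : H => t * z.1⁻¹) μ μ :=
    measurePreserving_mul_right μ z.1⁻¹
  have h1 : MemLp (fun t => ξ (t * z.1⁻¹)) 2 μ :=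
    (Lp.memLp ξ).comp_measurePreserving hmp
  have hω : Continuous fun t : H => (z.2 t : ℂ) :=
    continuous_subtype_val.comp (map_continuous z.2)
  refine MemLp.of_le h1 (hω.aestronglyMeasurable.mul h1.1) ?_
  filter_upwards with t
  rw [norm_mul]
  have h : ‖(z.2 t : ℂ)‖ = 1 := Circle.norm_coe (z.2 t)
  simp only [h, one_mul, le_refl]

/-- The time-frequency shift `π(z) = π(x,ω) : L²(H) → L²(H)`, `(π(x,ω)ξ)(t) = ω(t)·ξ(t·x⁻¹)`. -/
def tf (μ : Measure H) [μ.IsMulRightInvariant]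
    (z : H × PontryaginDual H) (ξ : Lp ℂ 2 μ) : Lp ℂ 2 μ :=
  (tf_memℒp μ z ξ).toLp _

/-- `stft μ ξ η z` is the inner product `⟨ξ, π(z)η⟩` of the paper (which is linear in `ξ` and
conjugate-linear in `π(z)η`; Mathlib's `inner` is conjugate-linear in its first argument). -/
def stft (μ : Measure H) [μ.IsMulRightInvariant] (ξ η : Lp ℂ 2 μ)
    (z : H × PontryaginDual H) : ℂ :=
  @inner ℂ _ _ (tf μ z η) ξ

variable [MeasurableSpace (PontryaginDual H)]

/-- Membership in the Feichtinger algebra `S₀(H)`: `∫_{H×Ĥ} |⟨ξ, π(z)ξ⟩| dz < ∞`. -/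
def IsS0 (μ : Measure H) [μ.IsMulRightInvariant]
    (μd : Measure (PontryaginDual H)) (ξ : Lp ℂ 2 μ) : Prop :=
  ∫⁻ z : H × PontryaginDual H, (‖stft μ ξ ξ z‖₊ : ENNReal) ∂(μ.prod μd) < ⊤

/-- The Gabor system `(π(z)η)_{z ∈ Λ}` is a Bessel family with Bessel bound `D`:
`∫_Λ |⟨ξ, π(z)η⟩|² dμ_Λ(z) ≤ D·‖ξ‖₂²` for all `ξ ∈ L²(H)`. -/
def IsBesselBound (μ : Measure H) [μ.IsMulRightInvariant]
    (Λ : Set (H × PontryaginDual H)) (μΛ : Measure Λ)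
    (η : Lp ℂ 2 μ) (D : ℝ) : Prop :=
  ∀ ξ : Lp ℂ 2 μ,
    ∫⁻ z : Λ, (‖stft μ ξ η (z : H × PontryaginDual H)‖₊ : ENNReal) ^ 2 ∂μΛ ≤
      ENNReal.ofReal D * (‖ξ‖₊ : ENNReal) ^ 2

/-- The Gabor system `(π(z)η)_{z ∈ Λ}` is a Bessel family. -/
def IsBessel (μ : Measure H) [μ.IsMulRightInvariant]
    (Λ : Set (H × PontryaginDual H)) (μΛ : Measure Λ)
    (η : Lp ℂ 2 μ) : Prop :=
  ∃ D : ℝ, 0 < D ∧ IsBesselBound μ Λ μΛ η D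

/-- The square `‖η‖_{B_Λ}²` of the Bessel norm of `η`, i.e.
`sup_{‖ξ‖₂=1} ∫_Λ |⟨ξ, π(z)η⟩|² dμ_Λ(z)`, as a value in `[0,∞]`. -/
def besselSq (μ : Measure H) [μ.IsMulRightInvariant]
    (Λ : Set (H × PontryaginDual H)) (μΛ : Measure Λ)
    (η : Lp ℂ 2 μ) : ENNReal :=
  ⨆ ξ : {ξ : Lp ℂ 2 μ // ‖ξ‖ = 1},
    ∫⁻ z : Λ, (‖stft μ (ξ : Lp ℂ 2 μ) η (z : H × PontryaginDual H)‖₊ : ENNReal) ^ 2 ∂μΛ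

/-- The concrete realization of the Heisenberg module `E_Λ(H)` inside `L²(H)`: all `η ∈ L²(H)`
generating a Bessel family over `Λ` which are approximated arbitrarily well, in the Bessel
norm, by elements of the Feichtinger algebra `S₀(H)`. -/
def heisSet (μ : Measure H) [μ.IsMulRightInvariant]
    (μd : Measure (PontryaginDual H))
    (Λ : Set (H × PontryaginDual H)) (μΛ : Measure Λ) : Set (Lp ℂ 2 μ) :=
  {η | IsBessel μ Λ μΛ η ∧
    ∀ ε : ℝ, 0 < ε → ∃ ζ : Lp ℂ 2 μ, IsS0 μ μd ζ ∧
      besselSq μ Λ μΛ (η - ζ) ≤ ENNReal.ofReal (ε ^ 2)}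

end Gabor

/-!
Write `F = ∫ a(z) π(z)ξ dz`. Since `π` is unitary and `π(w)π(z')` is `π(wz')` up to a unimodular
scalar, expanding both copies of `F` in `⟨F, π(w)F⟩` gives
`|⟨F, π(w)F⟩| ≤ ∫∫ |a(z)| |a(z')| |⟨ξ, π(z⁻¹wz')ξ⟩| dz dz'`.
Integrating over `w`, Tonelli and the invariance of Haar measure on `G × Ĝ` yield
`‖V_F F‖₁ ≤ ‖a‖₁² ‖V_ξ ξ‖₁`.
-/

open scoped InnerProductSpace ENNReal

theorem enorm_inner_integral_smul_le {X E : Type*} [MeasurableSpace X] {ν : Measure X}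
    [NormedAddCommGroup E] [InnerProductSpace ℂ E] [CompleteSpace E]
    (a : X → ℂ) (f : X → E) (x : E) :
    ‖⟪x, ∫ z, a z • f z ∂ν⟫_ℂ‖ₑ ≤ ∫⁻ z, ‖a z‖ₑ * ‖⟪x, f z⟫_ℂ‖ₑ ∂ν := by
  by_cases hf : Integrable (fun z => a z • f z) ν
  · rw [← integral_inner hf]
    refine (enorm_integral_le_lintegral_enorm _).trans_eq ?_
    simp only [inner_smul_right, enorm_mul]
  · simp [integral_undef hf]

theorem lintegral_lintegral_mul_comp_mul_left {K X : Type*} [Group K] [MeasurableSpace K]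
    [MeasurableMul₂ K] (m : Measure K) [m.IsMulLeftInvariant] [SFinite m]
    [MeasurableSpace X] (ν : Measure X) [SFinite ν] {c : X → K} (hc : Measurable c)
    {B : X → ℝ≥0∞} (hB : Measurable B) {M : K → ℝ≥0∞} (hM : Measurable M) :
    ∫⁻ w, ∫⁻ z, B z * M (c z * w) ∂ν ∂m = (∫⁻ z, B z ∂ν) * ∫⁻ v, M v ∂m := by
  have hmeas : Measurable (Function.uncurry fun w z => B z * M (c z * w)) :=
    (hB.comp measurable_snd).mul (hM.comp ((hc.comp measurable_snd).mul measurable_fst))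
  rw [lintegral_lintegral_swap hmeas.aemeasurable]
  calc ∫⁻ z, ∫⁻ w, B z * M (c z * w) ∂m ∂ν = ∫⁻ z, B z * ∫⁻ v, M v ∂m ∂ν :=
        lintegral_congr fun z => by
          rw [← lintegral_mul_left_eq_self M (c z)]
          exact lintegral_const_mul _ (hM.comp (measurable_const_mul _))
    _ = (∫⁻ z, B z ∂ν) * ∫⁻ v, M v ∂m := lintegral_mul_const _ hB

namespace Gabor

variable {H : Type*} [CommGroup H] [TopologicalSpace H] [IsTopologicalGroup H]
  [MeasurableSpace H] [BorelSpace H]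

@[simp] theorem enorm_coe_circle (c : Circle) : ‖(c : ℂ)‖ₑ = 1 := by
  rw [← ofReal_norm, Circle.norm_coe, ENNReal.ofReal_one]

section TimeFrequencyShift

variable (μ : Measure H) [μ.IsMulRightInvariant]

theorem coeFn_tf (z : H × PontryaginDual H) (ξ : Lp ℂ 2 μ) :
    tf μ z ξ =ᵐ[μ] fun t => (z.2 t : ℂ) * ξ (t * z.1⁻¹) :=
  (tf_memℒp μ z ξ).coeFn_toLp

theorem ae_eq_comp_mul_right (c : H) {β : Type*} {f g : H → β} (h : f =ᵐ[μ] g) :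
    (fun t => f (t * c)) =ᵐ[μ] fun t => g (t * c) :=
  (measurePreserving_mul_right μ c).quasiMeasurePreserving.ae_eq_comp h

theorem tf_add (z : H × PontryaginDual H) (ξ η : Lp ℂ 2 μ) :
    tf μ z (ξ + η) = tf μ z ξ + tf μ z η := by
  apply Lp.ext
  filter_upwards [coeFn_tf μ z (ξ + η), coeFn_tf μ z ξ, coeFn_tf μ z η,
    ae_eq_comp_mul_right μ z.1⁻¹ (Lp.coeFn_add ξ η),
    Lp.coeFn_add (tf μ z ξ) (tf μ z η)] with t h h₁ h₂ hadd hadd'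
  rw [h, hadd', Pi.add_apply, h₁, h₂, hadd, Pi.add_apply, mul_add]

theorem tf_smul (z : H × PontryaginDual H) (c : ℂ) (ξ : Lp ℂ 2 μ) :
    tf μ z (c • ξ) = c • tf μ z ξ := by
  apply Lp.ext
  filter_upwards [coeFn_tf μ z (c • ξ), coeFn_tf μ z ξ,
    ae_eq_comp_mul_right μ z.1⁻¹ (Lp.coeFn_smul c ξ),
    Lp.coeFn_smul c (tf μ z ξ)] with t h h₁ hsmul hsmul'
  rw [h, hsmul', Pi.smul_apply, h₁, hsmul, Pi.smul_apply, smul_eq_mul, smul_eq_mul,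
    mul_left_comm]

theorem norm_tf (z : H × PontryaginDual H) (ξ : Lp ℂ 2 μ) : ‖tf μ z ξ‖ = ‖ξ‖ := by
  rw [tf, Lp.norm_toLp, Lp.norm_def, ← eLpNorm_comp_measurePreserving
    (Lp.aestronglyMeasurable ξ) (measurePreserving_mul_right μ z.1⁻¹)]
  congr 1
  refine eLpNorm_congr_norm_ae (Filter.Eventually.of_forall fun t => ?_)
  simp [Circle.norm_coe]

def tfₗᵢ (z : H × PontryaginDual H) : Lp ℂ 2 μ →ₗᵢ[ℂ] Lp ℂ 2 μ where
  toFun := tf μ z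
  map_add' := tf_add μ z
  map_smul' := tf_smul μ z
  norm_map' := norm_tf μ z

@[simp] theorem tfₗᵢ_apply (z : H × PontryaginDual H) (ξ : Lp ℂ 2 μ) :
    tfₗᵢ μ z ξ = tf μ z ξ := rfl

theorem tf_one (ξ : Lp ℂ 2 μ) : tf μ 1 ξ = ξ := by
  apply Lp.ext
  filter_upwards [coeFn_tf μ 1 ξ] with t ht
  simpa [show ((1 : PontryaginDual H) t) = 1 from rfl] using ht

theorem tf_tf (w v : H × PontryaginDual H) (ξ : Lp ℂ 2 μ) :
    tf μ w (tf μ v ξ) = ((v.2 w.1 : Circle) : ℂ)⁻¹ • tf μ (w * v) ξ := by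
  apply Lp.ext
  filter_upwards [coeFn_tf μ w (tf μ v ξ), ae_eq_comp_mul_right μ w.1⁻¹ (coeFn_tf μ v ξ),
    Lp.coeFn_smul (((v.2 w.1 : Circle) : ℂ)⁻¹) (tf μ (w * v) ξ),
    coeFn_tf μ (w * v) ξ] with t hw hv hsmul hwv
  rw [hw, hv, hsmul, Pi.smul_apply, hwv, Prod.fst_mul, Prod.snd_mul, smul_eq_mul,
    mul_inv_rev, mul_comm v.1⁻¹, ← mul_assoc t, map_mul, map_inv,
    show (w.2 * v.2) t = w.2 t * v.2 t from rfl]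
  push_cast
  ring

theorem inner_tf_tf (z : H × PontryaginDual H) (ξ η : Lp ℂ 2 μ) :
    ⟪tf μ z ξ, tf μ z η⟫_ℂ = ⟪ξ, η⟫_ℂ := by
  rw [L2.inner_def, L2.inner_def,
    ← integral_mul_right_eq_self (fun s => ⟪ξ s, η s⟫_ℂ) z.1⁻¹]
  refine integral_congr_ae ?_
  filter_upwards [coeFn_tf μ z ξ, coeFn_tf μ z η] with t hξ hη
  rw [RCLike.inner_apply, RCLike.inner_apply, hξ, hη, map_mul, mul_mul_mul_comm,
    ← Circle.coe_inv_eq_conj]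
  simp

theorem enorm_inner_tf_tf (u v : H × PontryaginDual H) (ξ η : Lp ℂ 2 μ) :
    ‖⟪tf μ u ξ, tf μ v η⟫_ℂ‖ₑ = ‖⟪ξ, tf μ (u⁻¹ * v) η⟫_ℂ‖ₑ := by
  rw [← inner_tf_tf μ u⁻¹, tf_tf, tf_tf, inv_mul_cancel, tf_one, inner_smul_left,
    inner_smul_right, enorm_mul, enorm_mul]
  simp

theorem enorm_inner_tf_tf_tf (u w v : H × PontryaginDual H) (ξ : Lp ℂ 2 μ) :
    ‖⟪tf μ u ξ, tf μ w (tf μ v ξ)⟫_ℂ‖ₑ = ‖stft μ ξ ξ (u⁻¹ * w * v)‖ₑ := by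
  rw [tf_tf, inner_smul_right, enorm_mul, enorm_inner_tf_tf, stft, ← inner_conj_symm,
    RCLike.enorm_conj, mul_assoc]
  simp

theorem enorm_stft_integral_smul_tf_le {X : Type*} [MeasurableSpace X] (ν : Measure X)
    (ι : X → H × PontryaginDual H) (a : X → ℂ) (ξ : Lp ℂ 2 μ) (w : H × PontryaginDual H) :
    ‖stft μ (∫ z, a z • tf μ (ι z) ξ ∂ν) (∫ z, a z • tf μ (ι z) ξ ∂ν) w‖ₑ ≤
      ∫⁻ z, ‖a z‖ₑ * ∫⁻ z', ‖a z'‖ₑ * ‖stft μ ξ ξ ((ι z)⁻¹ * w * ι z')‖ₑ ∂ν ∂ν := by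
  set F := ∫ z, a z • tf μ (ι z) ξ ∂ν
  have hshift : tf μ w F = ∫ z', a z' • tf μ w (tf μ (ι z') ξ) ∂ν := by
    rw [← tfₗᵢ_apply, ← LinearIsometry.integral_comp_comm]
    simp only [LinearIsometry.map_smul, tfₗᵢ_apply]
  calc ‖⟪tf μ w F, F⟫_ℂ‖ₑ ≤ ∫⁻ z, ‖a z‖ₑ * ‖⟪tf μ w F, tf μ (ι z) ξ⟫_ℂ‖ₑ ∂ν :=
        enorm_inner_integral_smul_le _ _ _
    _ = ∫⁻ z, ‖a z‖ₑ * ‖⟪tf μ (ι z) ξ, tf μ w F⟫_ℂ‖ₑ ∂ν := by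
        simp_rw [← inner_conj_symm (tf μ w F), RCLike.enorm_conj]
    _ ≤ _ := by
        refine lintegral_mono fun z => ?_
        gcongr
        rw [hshift]
        refine (enorm_inner_integral_smul_le _ _ _).trans_eq ?_
        simp_rw [enorm_inner_tf_tf_tf]

end TimeFrequencyShift

theorem stronglyMeasurable_stft [LocallyCompactSpace H] [SecondCountableTopology H]
    [MeasurableSpace (PontryaginDual H)] [BorelSpace (PontryaginDual H)]
    (μ : Measure H) [μ.IsMulRightInvariant] [SFinite μ] (ξ η : Lp ℂ 2 μ) :
    StronglyMeasurable (stft μ ξ η) := by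
  have hξ := Lp.aestronglyMeasurable ξ
  have hη := Lp.aestronglyMeasurable η
  have hstft : stft μ ξ η =
      fun z => ∫ t, conj ((z.2 t : ℂ) * hη.mk η (t * z.1⁻¹)) * hξ.mk ξ t ∂μ := by
    funext z
    rw [stft, L2.inner_def]
    refine integral_congr_ae ?_
    filter_upwards [coeFn_tf μ z η, hξ.ae_eq_mk, ae_eq_comp_mul_right μ z.1⁻¹ hη.ae_eq_mk]
      with t hz hξt hηt
    rw [RCLike.inner_apply, hz, hξt, hηt, mul_comm]
  -- `PontryaginDual H` is a type synonym, so this instance is not found by unification.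
  have : ContinuousEval (PontryaginDual H) H Circle :=
    ContinuousMonoidHom.instContinuousEval H Circle
  have hchar : Continuous fun p : (H × PontryaginDual H) × H => (p.1.2 p.2 : ℂ) :=
    continuous_subtype_val.comp
      (ContinuousEval.continuous_eval.comp (continuous_fst.snd.prodMk continuous_snd))
  rw [hstft]
  refine StronglyMeasurable.integral_prod_right' (f := fun p : (H × PontryaginDual H) × H =>
    conj ((p.1.2 p.2 : ℂ) * hη.mk η (p.2 * p.1.1⁻¹)) * hξ.mk ξ p.2) ?_
  refine (Complex.continuous_conj.comp_stronglyMeasurable ?_).mul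
    (hξ.stronglyMeasurable_mk.comp_measurable measurable_snd)
  exact hchar.stronglyMeasurable.mul (hη.stronglyMeasurable_mk.comp_measurable
    (measurable_snd.mul measurable_fst.fst.inv))

theorem IsS0.integral_smul_tf [LocallyCompactSpace H] [SecondCountableTopology H]
    [MeasurableSpace (PontryaginDual H)] [BorelSpace (PontryaginDual H)]
    [SecondCountableTopology (PontryaginDual H)]
    {μ : Measure H} [μ.IsMulLeftInvariant] [SFinite μ]
    {μd : Measure (PontryaginDual H)} [μd.IsMulLeftInvariant] [SFinite μd]
    {X : Type*} [MeasurableSpace X] {ν : Measure X} [SFinite ν]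
    {ι : X → H × PontryaginDual H} (hι : Measurable ι) {a : X → ℂ} (ha : Integrable a ν)
    {ξ : Lp ℂ 2 μ} (hξ : IsS0 μ μd ξ) :
    IsS0 μ μd (∫ z, a z • tf μ (ι z) ξ ∂ν) := by
  set b := ha.1.mk a
  have hF : ∫ z, a z • tf μ (ι z) ξ ∂ν = ∫ z, b z • tf μ (ι z) ξ ∂ν :=
    integral_congr_ae (ha.1.ae_eq_mk.mono fun z hz => congrArg (· • tf μ (ι z) ξ) hz)
  set B : X → ℝ≥0∞ := fun z => ‖b z‖ₑ
  set N : H × PontryaginDual H → ℝ≥0∞ := fun v => ‖stft μ ξ ξ v‖ₑ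
  set M : H × PontryaginDual H → ℝ≥0∞ := fun v => ∫⁻ z', B z' * N (v * ι z') ∂ν
  have hB : Measurable B := ha.1.stronglyMeasurable_mk.measurable.enorm
  have hN : Measurable N := (stronglyMeasurable_stft μ ξ ξ).measurable.enorm
  have hM : Measurable M := Measurable.lintegral_prod_right'
    ((hB.comp measurable_snd).mul (hN.comp (measurable_fst.mul (hι.comp measurable_snd))))
  have hB_fin : ∫⁻ z, B z ∂ν < ⊤ := (ha.congr ha.1.ae_eq_mk).2
  have hbound (w : H × PontryaginDual H) :
      ‖stft μ (∫ z, b z • tf μ (ι z) ξ ∂ν) (∫ z, b z • tf μ (ι z) ξ ∂ν) w‖ₑ ≤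
        ∫⁻ z, B z * M ((ι z)⁻¹ * w) ∂ν :=
    enorm_stft_integral_smul_tf_le μ ν ι b ξ w
  have hM_eq : ∫⁻ v, M v ∂(μ.prod μd) = ∫⁻ v, ∫⁻ z', B z' * N (ι z' * v) ∂ν ∂(μ.prod μd) := by
    simp only [M, mul_comm _ (ι _)]
  rw [IsS0, hF]
  calc _ ≤ ∫⁻ w, ∫⁻ z, B z * M ((ι z)⁻¹ * w) ∂ν ∂(μ.prod μd) := lintegral_mono hbound
    _ = (∫⁻ z, B z ∂ν) * ((∫⁻ z, B z ∂ν) * ∫⁻ v, N v ∂(μ.prod μd)) := by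
        rw [lintegral_lintegral_mul_comp_mul_left _ _ (c := fun z => (ι z)⁻¹) hι.inv hB hM,
          hM_eq, lintegral_lintegral_mul_comp_mul_left _ _ hι hB hN]
    _ < ⊤ := ENNReal.mul_lt_top hB_fin (ENNReal.mul_lt_top hB_fin hξ)

end Gabor

open Gabor

theorem integrated_action_maps_feichtinger_to_feichtinger_general
    {G : Type*} [CommGroup G] [TopologicalSpace G] [IsTopologicalGroup G]
    [LocallyCompactSpace G] [SecondCountableTopology G]
    [MeasurableSpace G] [BorelSpace G]
    (μ : Measure G) [μ.IsHaarMeasure]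
    [MeasurableSpace (PontryaginDual G)] [BorelSpace (PontryaginDual G)]
    (μd : Measure (PontryaginDual G)) [μd.IsHaarMeasure]
    (Δ : Subgroup (G × PontryaginDual G))
    (hΔclosed : IsClosed (Δ : Set (G × PontryaginDual G)))
    (μΔ : Measure Δ) [μΔ.IsHaarMeasure]
    (a : Δ → ℂ) (ha1 : Integrable a μΔ)
    (ξ : Lp ℂ 2 μ) (hξ : IsS0 μ μd ξ) :
    IsS0 μ μd (∫ z : Δ, a z • tf μ (z : G × PontryaginDual G) ξ ∂μΔ) := by
  have : SecondCountableTopology (PontryaginDual G) :=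
    (ContinuousMonoidHom.isInducing_toContinuousMap G Circle).secondCountableTopology
  have : LocallyCompactSpace Δ := hΔclosed.locallyCompactSpace
  have : SecondCountableTopology Δ := Topology.IsInducing.subtypeVal.secondCountableTopology
  exact IsS0.integral_smul_tf measurable_subtype_coe ha1 hξ

/-- If `a ∈ L¹(Δ,μΔ) ∩ S₀(Δ)` and `ξ ∈ S₀(G)`, then the Bochner integral
`π_Δ(a)ξ := ∫_Δ a(z)·(π(z)ξ) dμΔ(z)` (an element of `L²(G)`) belongs to `S₀(G)`.
Here `Δ` is a closed subgroup of `G × Ĝ` with Haar measure `μΔ`, itself a second countable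
locally compact abelian group, so that the Feichtinger algebra `S₀(Δ)` makes sense (with
respect to a Haar measure `μΔd` on the dual of `Δ`). -/
theorem integrated_action_maps_feichtinger_to_feichtinger
    {G : Type*} [CommGroup G] [TopologicalSpace G] [IsTopologicalGroup G]
    [LocallyCompactSpace G] [T2Space G] [SecondCountableTopology G]
    [MeasurableSpace G] [BorelSpace G]
    (μ : Measure G) [μ.IsHaarMeasure]
    [MeasurableSpace (PontryaginDual G)] [BorelSpace (PontryaginDual G)]
    (μd : Measure (PontryaginDual G)) [μd.IsHaarMeasure]
    (Δ : Subgroup (G × PontryaginDual G))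
    (hΔclosed : IsClosed (Δ : Set (G × PontryaginDual G)))
    [BorelSpace Δ] (μΔ : Measure Δ) [μΔ.IsHaarMeasure]
    [MeasurableSpace (PontryaginDual Δ)] [BorelSpace (PontryaginDual Δ)]
    (μΔd : Measure (PontryaginDual Δ)) [μΔd.IsHaarMeasure]
    (a : Δ → ℂ) (ha1 : Integrable a μΔ) (ha2 : MemLp a 2 μΔ)
    (haS0 : IsS0 μΔ μΔd (ha2.toLp a))
    (ξ : Lp ℂ 2 μ) (hξ : IsS0 μ μd ξ) :
    IsS0 μ μd (∫ z : Δ, a z • tf μ (z : G × PontryaginDual G) ξ ∂μΔ) :=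
  integrated_action_maps_feichtinger_to_feichtinger_general μ μd Δ hΔclosed μΔ a ha1 ξ hξ
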